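/- arXiv:1110.1023 — 2 statements merged into one kernel-verified Lean document; each statement's English description precedes it below -/
import Mathlib

section
/- Let R be a (possibly noncommutative) associative unital ring and let ε ∈ R satisfy ε^n = 0 and n·ε = 0 for some positive integer n. Then (1 + ε)^(n^n) = 1. -/
/-
Write `(1 + ε)^n = 1 + n•ε + ε²c` with `c` commuting with `ε`. When `n•ε = 0` this says
`(1 + ε)^n = 1 + δ` with `δ = ε²c`, so raising to the `n`-th power nearly doubles the order of
vanishing of the perturbation while `n•δ = 0` persists, so after `k` such steps a perturbation
with `ε^k = 0` is gone.
-/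

section

variable {R : Type*} [Ring R]

theorem exists_commute_one_add_pow_eq (ε : R) (n : ℕ) :
    ∃ c : R, Commute ε c ∧ (1 + ε) ^ n = 1 + n • ε + ε ^ 2 * c := by
  induction n with
  | zero => exact ⟨0, Commute.zero_right ε, by simp⟩
  | succ m ih =>
    obtain ⟨c, hc, hpow⟩ := ih
    refine ⟨c + m • 1 + c * ε, (hc.add_right ((Commute.one_right ε).smul_right m)).add_right
      (hc.mul_right (Commute.refl ε)), ?_⟩
    rw [pow_succ, hpow]
    simp only [add_mul, mul_add, add_nsmul, one_nsmul, smul_mul_assoc, mul_smul_comm, pow_two,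
      mul_assoc, one_mul, mul_one]
    abel

theorem exists_commute_one_add_pow_eq_one_add_sq_mul {ε : R} {n : ℕ} (h : n • ε = 0) :
    ∃ c : R, Commute ε c ∧ (1 + ε) ^ n = 1 + ε ^ 2 * c := by
  obtain ⟨c, hc, hpow⟩ := exists_commute_one_add_pow_eq ε n
  exact ⟨c, hc, by rw [hpow, h, add_zero]⟩

theorem one_add_pow_pow_eq_one {ε : R} {n k : ℕ} (hk : ε ^ k = 0) (hn : n • ε = 0) :
    (1 + ε) ^ (n ^ k) = 1 := by
  induction k generalizing ε with
  | zero =>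
    have : Subsingleton R := subsingleton_of_zero_eq_one (by simpa using hk.symm)
    exact Subsingleton.elim _ _
  | succ k ih =>
    rcases k.eq_zero_or_pos with rfl | hk_pos
    · simp [pow_one ε ▸ hk]
    obtain ⟨c, hc, hpow⟩ := exists_commute_one_add_pow_eq_one_add_sq_mul hn
    have hδ_pow : (ε ^ 2 * c) ^ k = 0 := by
      rw [(hc.pow_left 2).mul_pow, ← pow_mul, show 2 * k = (k + 1) + (k - 1) by omega,
        pow_add, hk, zero_mul, zero_mul]
    have hδ_smul : n • (ε ^ 2 * c) = 0 := by
      rw [← smul_mul_assoc, pow_two, ← smul_mul_assoc, hn, zero_mul, zero_mul]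
    rw [pow_succ', pow_mul, hpow]
    exact ih hδ_pow hδ_smul

end

theorem one_add_nilpotent_pow_eq_one_general (R : Type*) [Ring R] (n : ℕ)
    (ε : R) (h1 : ε ^ n = 0) (h2 : n • ε = 0) :
    (1 + ε) ^ (n ^ n) = 1 :=
  one_add_pow_pow_eq_one h1 h2

theorem one_add_nilpotent_pow_eq_one (R : Type*) [Ring R] (n : ℕ) (hn : 0 < n)
    (ε : R) (h1 : ε ^ n = 0) (h2 : n • ε = 0) :
    (1 + ε) ^ (n ^ n) = 1 :=
  one_add_nilpotent_pow_eq_one_general R n ε h1 h2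
end

section
/- For every integer n ≥ 1 and every integer i with 0 < i < n, the binomial coefficient C(n^n, i) is divisible by n. -/
namespace Nat

theorem dvd_choose_mul_self (m i : ℕ) : m ∣ m.choose i * i := by
  rcases m with _ | m
  · exact zero_dvd_iff.mpr (by cases i <;> simp)
  rcases i with _ | i
  · simp
  exact ⟨_, (add_one_mul_choose_eq m i).symm⟩

/-- At every prime `p ∣ n` we have `v_p(i) < i ≤ k ≤ k · v_p(n)`, so the factor `i` can absorb
all but one power of `n` in `n ^ k ∣ c * i`. -/
theorem dvd_of_pow_dvd_mul_of_le {n k c i : ℕ} (h : n ^ k ∣ c * i) (hi : i ≠ 0) (hik : i ≤ k) :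
    n ∣ c := by
  rcases eq_or_ne c 0 with rfl | hc
  · exact dvd_zero n
  have hn : n ≠ 0 := by
    rintro rfl
    simp [zero_pow (by omega : k ≠ 0), hc, hi] at h
  rw [← factorization_le_iff_dvd hn hc]
  intro p
  have hval : k * n.factorization p ≤ c.factorization p + i.factorization p := by
    simpa [factorization_pow, factorization_mul hc hi] using
      (factorization_le_iff_dvd (pow_ne_zero k hn) (mul_ne_zero hc hi)).mpr h p
  have hi_val : i.factorization p < k := (factorization_lt p hi).trans_le hik
  rcases Nat.eq_zero_or_pos (n.factorization p) with hp | hp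
  · simp [hp]
  · nlinarith

end Nat

theorem n_dvd_choose_pow_general (n i : ℕ) (hi : 0 < i) (hin : i < n) :
    n ∣ Nat.choose (n ^ n) i :=
  Nat.dvd_of_pow_dvd_mul_of_le (Nat.dvd_choose_mul_self _ i) hi.ne' hin.le

theorem n_dvd_choose_pow (n i : ℕ) (hn : 1 ≤ n) (hi : 0 < i) (hin : i < n) :
    n ∣ Nat.choose (n ^ n) i :=
  n_dvd_choose_pow_general n i hi hin
end
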